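/- Let n, d ≥ 1 and let U_i, V_i ∈ ℝ^{d×d} (1 ≤ i ≤ n) satisfy Assumption 2, with Q ∈ ℝ^{dn×dn} the associated block-factorizable matrix. Let S = {t_1 < t_2 < … < t_k} be a nonempty subset of {1,…,n}. Then the block principal submatrix Q_{[S]} is invertible and hat(Q_{[S]}⁻¹) = Σ_{ℓ=1}^{k−1} Λ_{[t_ℓ→t_{ℓ+1}]} + Λ_{[t_k→n+1]}. -/

import Mathlib

open Matrix BigOperators
open scoped Classical

/-- The block-factorizable matrix with `(i,j)`-th `d×d` block `U_i V_jᵀ` for `i ≤ j`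
and `V_i U_jᵀ` for `i > j`. -/
noncomputable def blockQ (n d : ℕ) (U V : Fin n → Matrix (Fin d) (Fin d) ℝ) :
    Matrix (Fin n × Fin d) (Fin n × Fin d) ℝ :=
  Matrix.of fun p q =>
    if p.1 ≤ q.1 then (U p.1 * (V q.1)ᵀ) p.2 q.2 else (V p.1 * (U q.1)ᵀ) p.2 q.2

/-- Assumption 2. -/
def Assumption2 (n d : ℕ) (U V : Fin n → Matrix (Fin d) (Fin d) ℝ) : Prop :=
  (∀ i : Fin n, (U i * (V i)ᵀ).PosDef) ∧
    ∀ i j : Fin n, i < j → (U i * (V i)ᵀ - U i * (U j)⁻¹ * V j * (U i)ᵀ).PosDef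

/-- `E_i`, the `dn×d` block column matrix whose `i`-th block is the identity. -/
def Emat (n d : ℕ) (i : Fin n) : Matrix (Fin n × Fin d) (Fin d) ℝ :=
  Matrix.of fun p b => if p.1 = i ∧ p.2 = b then 1 else 0

/-- `Λ_{[i→j]}` for `1 ≤ i < j ≤ n`. -/
noncomputable def BLamMid (n d : ℕ) (U V : Fin n → Matrix (Fin d) (Fin d) ℝ) (i j : Fin n) :
    Matrix (Fin n × Fin d) (Fin n × Fin d) ℝ :=
  (Emat n d i - Emat n d j * ((U j)ᵀ)⁻¹ * (U i)ᵀ) *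
    (U i * (V i)ᵀ - U i * (U j)⁻¹ * V j * (U i)ᵀ)⁻¹ *
    (Emat n d i - Emat n d j * ((U j)ᵀ)⁻¹ * (U i)ᵀ)ᵀ

/-- `Λ_{[i→n+1]} = E_i (U_i V_iᵀ)⁻¹ E_iᵀ`. -/
noncomputable def BLamEnd (n d : ℕ) (U V : Fin n → Matrix (Fin d) (Fin d) ℝ) (i : Fin n) :
    Matrix (Fin n × Fin d) (Fin n × Fin d) ℝ :=
  Emat n d i * (U i * (V i)ᵀ)⁻¹ * (Emat n d i)ᵀ

/-- The block principal submatrix of `Q` with block indices in `S`. -/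
noncomputable def blockSubMat (n d : ℕ) (Q : Matrix (Fin n × Fin d) (Fin n × Fin d) ℝ)
    (S : Finset (Fin n)) :
    Matrix {r : Fin n × Fin d // r.1 ∈ S} {r : Fin n × Fin d // r.1 ∈ S} ℝ :=
  Q.submatrix (fun p => (p : Fin n × Fin d)) (fun p => (p : Fin n × Fin d))

/-- The `dn×dn` matrix agreeing with `(Q_{[S]})⁻¹` on blocks indexed by `S×S`
and `0` elsewhere. -/
noncomputable def blockHatInv (n d : ℕ) (Q : Matrix (Fin n × Fin d) (Fin n × Fin d) ℝ)
    (S : Finset (Fin n)) : Matrix (Fin n × Fin d) (Fin n × Fin d) ℝ :=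
  Matrix.of fun p q =>
    if hp : p.1 ∈ S then
      if hq : q.1 ∈ S then (blockSubMat n d Q S)⁻¹ ⟨p, hp⟩ ⟨q, hq⟩ else 0
    else 0


/-!
Write `N` for the right-hand side. Every `Λ` in it lives on the blocks of `S × S`, so it suffices
to show that block row `p = t_m` of `Q N` is `E_pᵀ`. Because `U_i V_iᵀ` is symmetric, the blocks
of `Q` in a row `p ≥ j` are `V_p U_iᵀ` and `V_p U_jᵀ`, which `E_i - E_j U_j⁻ᵀ U_iᵀ` annihilates;
in a row `p ≤ i` the same factor produces `U_p U_i⁻¹` times the Schur-type block it is divided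
by. Hence block row `p` of `Q Λ_{[i→j]}` is `U_p U_i⁻¹ E_iᵀ - U_p U_j⁻¹ E_jᵀ` for `p ≤ i < j` and
`0` for `i < j ≤ p`, while that of `Q Λ_{[i→n+1]}` is `U_p U_i⁻¹ E_iᵀ` for `p ≤ i`. Along the chain
these telescope to `U_p U_p⁻¹ E_pᵀ = E_pᵀ`.
-/

section Emat

variable {n d : ℕ}

theorem Emat_transpose_mul {α : Type*} (i : Fin n) (M : Matrix (Fin n × Fin d) α ℝ) :
    (Emat n d i)ᵀ * M = M.submatrix (Prod.mk i) id := by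
  ext a b
  simp [Matrix.mul_apply, Emat, Fintype.sum_prod_type, ite_and]

theorem mul_Emat {α : Type*} (M : Matrix α (Fin n × Fin d) ℝ) (j : Fin n) :
    M * Emat n d j = M.submatrix id (Prod.mk j) := by
  ext a b
  simp [Matrix.mul_apply, Emat, Fintype.sum_prod_type, ite_and]

theorem Emat_transpose_mul_Emat (i j : Fin n) :
    (Emat n d i)ᵀ * Emat n d j = if i = j then 1 else 0 := by
  rw [Emat_transpose_mul]
  ext a b
  by_cases h : i = j <;> simp [Emat, Matrix.one_apply, h, eq_comm]

theorem Emat_transpose_mul_blockQ_mul_Emat (U V : Fin n → Matrix (Fin d) (Fin d) ℝ)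
    (p r : Fin n) :
    (Emat n d p)ᵀ * blockQ n d U V * Emat n d r =
      if p ≤ r then U p * (V r)ᵀ else V p * (U r)ᵀ := by
  ext a b
  by_cases h : p ≤ r <;> simp [Emat_transpose_mul, mul_Emat, blockQ, h]

end Emat

namespace Assumption2

variable {n d : ℕ} {U V : Fin n → Matrix (Fin d) (Fin d) ℝ}

theorem isUnit_det_U_mul_V_transpose (hA : Assumption2 n d U V) (i : Fin n) :
    IsUnit (U i * (V i)ᵀ).det :=
  (Matrix.isUnit_iff_isUnit_det _).mp (hA.1 i).isUnit

theorem isUnit_det_U (hA : Assumption2 n d U V) (i : Fin n) : IsUnit (U i).det :=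
  isUnit_of_mul_isUnit_left (Matrix.det_mul (U i) _ ▸ hA.isUnit_det_U_mul_V_transpose i)

theorem isUnit_det_V_transpose (hA : Assumption2 n d U V) (i : Fin n) :
    IsUnit (V i)ᵀ.det :=
  isUnit_of_mul_isUnit_right (Matrix.det_mul (U i) _ ▸ hA.isUnit_det_U_mul_V_transpose i)

theorem V_mul_U_transpose (hA : Assumption2 n d U V) (i : Fin n) :
    V i * (U i)ᵀ = U i * (V i)ᵀ := by
  have h := (hA.1 i).isHermitian.eq
  rwa [Matrix.conjTranspose_eq_transpose_of_trivial, Matrix.transpose_mul,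
    Matrix.transpose_transpose] at h

theorem V_transpose_mul_inv_U_transpose (hA : Assumption2 n d U V) (i : Fin n) :
    (V i)ᵀ * ((U i)ᵀ)⁻¹ = (U i)⁻¹ * V i := by
  have hU := hA.isUnit_det_U i
  have hUt : IsUnit (U i)ᵀ.det := by rwa [Matrix.det_transpose]
  calc (V i)ᵀ * ((U i)ᵀ)⁻¹ = (U i)⁻¹ * (U i * (V i)ᵀ) * ((U i)ᵀ)⁻¹ := by
        rw [Matrix.nonsing_inv_mul_cancel_left _ _ hU]
    _ = (U i)⁻¹ * V i := by
        rw [← hA.V_mul_U_transpose, ← Matrix.mul_assoc, Matrix.mul_nonsing_inv_cancel_right _ _ hUt]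

end Assumption2

section BlockRows

variable {n d : ℕ} {U V : Fin n → Matrix (Fin d) (Fin d) ℝ}

noncomputable def BLamFactor (n d : ℕ) (U : Fin n → Matrix (Fin d) (Fin d) ℝ) (i j : Fin n) :
    Matrix (Fin n × Fin d) (Fin d) ℝ :=
  Emat n d i - Emat n d j * ((U j)ᵀ)⁻¹ * (U i)ᵀ

noncomputable def BLamSchur (U V : Fin n → Matrix (Fin d) (Fin d) ℝ) (i j : Fin n) :
    Matrix (Fin d) (Fin d) ℝ :=
  U i * (V i)ᵀ - U i * (U j)⁻¹ * V j * (U i)ᵀ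

theorem BLamMid_eq (i j : Fin n) :
    BLamMid n d U V i j =
      BLamFactor n d U i j * (BLamSchur U V i j)⁻¹ * (BLamFactor n d U i j)ᵀ :=
  rfl

theorem BLamFactor_transpose (i j : Fin n) :
    (BLamFactor n d U i j)ᵀ = (Emat n d i)ᵀ - U i * (U j)⁻¹ * (Emat n d j)ᵀ := by
  simp only [BLamFactor, Matrix.transpose_sub, Matrix.transpose_mul, Matrix.transpose_transpose,
    ← Matrix.transpose_nonsing_inv, Matrix.mul_assoc]

theorem Emat_transpose_mul_blockQ_mul_Emat_of_ge (hA : Assumption2 n d U V) {p r : Fin n}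
    (h : r ≤ p) :
    (Emat n d p)ᵀ * blockQ n d U V * Emat n d r = V p * (U r)ᵀ := by
  rw [Emat_transpose_mul_blockQ_mul_Emat]
  rcases h.eq_or_lt with rfl | hlt
  · rw [if_pos le_rfl, hA.V_mul_U_transpose]
  · rw [if_neg hlt.not_ge]

theorem Emat_transpose_mul_blockQ_mul_BLamFactor_of_le (hA : Assumption2 n d U V)
    {p i j : Fin n} (hpi : p ≤ i) (hij : i ≤ j) :
    (Emat n d p)ᵀ * blockQ n d U V * BLamFactor n d U i j =
      U p * (U i)⁻¹ * BLamSchur U V i j := by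
  rw [BLamFactor, Matrix.mul_sub, Emat_transpose_mul_blockQ_mul_Emat, if_pos hpi,
    ← Matrix.mul_assoc, ← Matrix.mul_assoc, Emat_transpose_mul_blockQ_mul_Emat,
    if_pos (hpi.trans hij), Matrix.mul_assoc (U p), hA.V_transpose_mul_inv_U_transpose]
  simp only [BLamSchur, Matrix.mul_sub, Matrix.mul_assoc,
    Matrix.nonsing_inv_mul_cancel_left _ _ (hA.isUnit_det_U i)]

theorem Emat_transpose_mul_blockQ_mul_BLamFactor_of_ge (hA : Assumption2 n d U V)
    {p i j : Fin n} (hij : i ≤ j) (hjp : j ≤ p) :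
    (Emat n d p)ᵀ * blockQ n d U V * BLamFactor n d U i j = 0 := by
  have hUt : IsUnit (U j)ᵀ.det := by rw [Matrix.det_transpose]; exact hA.isUnit_det_U j
  rw [BLamFactor, Matrix.mul_sub, Emat_transpose_mul_blockQ_mul_Emat_of_ge hA (hij.trans hjp),
    ← Matrix.mul_assoc, ← Matrix.mul_assoc, Emat_transpose_mul_blockQ_mul_Emat_of_ge hA hjp,
    Matrix.mul_nonsing_inv_cancel_right _ _ hUt, sub_self]

theorem Emat_transpose_mul_blockQ_mul_BLamMid_of_le (hA : Assumption2 n d U V)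
    {p i j : Fin n} (hpi : p ≤ i) (hij : i < j) :
    (Emat n d p)ᵀ * blockQ n d U V * BLamMid n d U V i j =
      U p * (U i)⁻¹ * (Emat n d i)ᵀ - U p * (U j)⁻¹ * (Emat n d j)ᵀ := by
  have hD : IsUnit (BLamSchur U V i j).det :=
    (Matrix.isUnit_iff_isUnit_det _).mp (hA.2 i j hij).isUnit
  calc (Emat n d p)ᵀ * blockQ n d U V * BLamMid n d U V i j
      = (Emat n d p)ᵀ * blockQ n d U V * BLamFactor n d U i j * (BLamSchur U V i j)⁻¹ *
          (BLamFactor n d U i j)ᵀ := by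
        simp only [BLamMid_eq, Matrix.mul_assoc]
    _ = U p * (U i)⁻¹ * (BLamFactor n d U i j)ᵀ := by
        rw [Emat_transpose_mul_blockQ_mul_BLamFactor_of_le hA hpi hij.le,
          Matrix.mul_nonsing_inv_cancel_right _ _ hD]
    _ = U p * (U i)⁻¹ * (Emat n d i)ᵀ - U p * (U j)⁻¹ * (Emat n d j)ᵀ := by
        simp only [BLamFactor_transpose, Matrix.mul_sub, Matrix.mul_assoc,
          Matrix.nonsing_inv_mul_cancel_left _ _ (hA.isUnit_det_U i)]

theorem Emat_transpose_mul_blockQ_mul_BLamMid_of_ge (hA : Assumption2 n d U V)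
    {p i j : Fin n} (hij : i ≤ j) (hjp : j ≤ p) :
    (Emat n d p)ᵀ * blockQ n d U V * BLamMid n d U V i j = 0 := by
  simp only [BLamMid_eq, ← Matrix.mul_assoc,
    Emat_transpose_mul_blockQ_mul_BLamFactor_of_ge hA hij hjp, Matrix.zero_mul]

theorem Emat_transpose_mul_blockQ_mul_BLamEnd (hA : Assumption2 n d U V) {p i : Fin n}
    (hpi : p ≤ i) :
    (Emat n d p)ᵀ * blockQ n d U V * BLamEnd n d U V i = U p * (U i)⁻¹ * (Emat n d i)ᵀ := by
  simp only [BLamEnd, ← Matrix.mul_assoc, Emat_transpose_mul_blockQ_mul_Emat, if_pos hpi,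
    Matrix.mul_inv_rev]
  rw [Matrix.mul_assoc (U p), Matrix.mul_nonsing_inv _ (hA.isUnit_det_V_transpose i),
    Matrix.mul_one]

end BlockRows

section Support

variable {n d : ℕ} {U V : Fin n → Matrix (Fin d) (Fin d) ℝ}

theorem Emat_transpose_mul_BLamFactor_of_ne {p i j : Fin n} (hi : p ≠ i) (hj : p ≠ j) :
    (Emat n d p)ᵀ * BLamFactor n d U i j = 0 := by
  simp only [BLamFactor, Matrix.mul_sub, ← Matrix.mul_assoc, Emat_transpose_mul_Emat, if_neg hi,
    if_neg hj, Matrix.zero_mul, sub_zero]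

theorem Emat_transpose_mul_BLamMid_of_ne {p i j : Fin n} (hi : p ≠ i) (hj : p ≠ j) :
    (Emat n d p)ᵀ * BLamMid n d U V i j = 0 := by
  simp only [BLamMid_eq, ← Matrix.mul_assoc, Emat_transpose_mul_BLamFactor_of_ne hi hj,
    Matrix.zero_mul]

theorem BLamMid_mul_Emat_of_ne {q i j : Fin n} (hi : q ≠ i) (hj : q ≠ j) :
    BLamMid n d U V i j * Emat n d q = 0 := by
  rw [BLamMid_eq, Matrix.mul_assoc, ← Matrix.transpose_transpose (Emat n d q),
    ← Matrix.transpose_mul, Emat_transpose_mul_BLamFactor_of_ne hi hj, Matrix.transpose_zero,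
    Matrix.mul_zero]

theorem Emat_transpose_mul_BLamEnd_of_ne {p i : Fin n} (hi : p ≠ i) :
    (Emat n d p)ᵀ * BLamEnd n d U V i = 0 := by
  simp only [BLamEnd, ← Matrix.mul_assoc, Emat_transpose_mul_Emat, if_neg hi, Matrix.zero_mul]

theorem BLamEnd_mul_Emat_of_ne {q i : Fin n} (hi : q ≠ i) :
    BLamEnd n d U V i * Emat n d q = 0 := by
  simp only [BLamEnd, Matrix.mul_assoc, Emat_transpose_mul_Emat, if_neg hi.symm, Matrix.mul_zero]

end Support

theorem Finset.sum_range_ite_telescope {M : Type*} [AddCommGroup M] (g : ℕ → M) {m k : ℕ}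
    (hmk : m < k) :
    ∑ x ∈ Finset.range k, (if m ≤ x ∧ x + 1 < k then g x - g (x + 1) else 0) =
      g m - g (k - 1) := by
  have hIco : (Finset.range k).filter (fun x => m ≤ x ∧ x + 1 < k) = Finset.Ico m (k - 1) := by
    ext x
    simp only [Finset.mem_filter, Finset.mem_range, Finset.mem_Ico]
    omega
  rw [← Finset.sum_filter, hIco, ← neg_sub, ← Finset.sum_Ico_sub g (by omega),
    ← Finset.sum_neg_distrib]
  simp only [neg_sub]

section Chain

variable {n d : ℕ} {U V : Fin n → Matrix (Fin d) (Fin d) ℝ} {k : ℕ}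

noncomputable def BLamChain (n d : ℕ) (U V : Fin n → Matrix (Fin d) (Fin d) ℝ)
    (t : Fin k → Fin n) (hk : 0 < k) : Matrix (Fin n × Fin d) (Fin n × Fin d) ℝ :=
  (∑ ℓ : Fin k,
      if h : (ℓ : ℕ) + 1 < k then BLamMid n d U V (t ℓ) (t ⟨(ℓ : ℕ) + 1, h⟩) else 0) +
    BLamEnd n d U V (t ⟨k - 1, Nat.sub_lt hk Nat.one_pos⟩)

theorem Emat_transpose_mul_BLamChain_of_notMem {t : Fin k → Fin n} (hk : 0 < k) {p : Fin n}
    (hp : ∀ m, t m ≠ p) : (Emat n d p)ᵀ * BLamChain n d U V t hk = 0 := by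
  rw [BLamChain, Matrix.mul_add, Matrix.mul_sum, Emat_transpose_mul_BLamEnd_of_ne (hp _).symm,
    add_zero]
  refine Finset.sum_eq_zero fun ℓ _ => ?_
  split_ifs
  · exact Emat_transpose_mul_BLamMid_of_ne (hp _).symm (hp _).symm
  · exact Matrix.mul_zero _

theorem BLamChain_mul_Emat_of_notMem {t : Fin k → Fin n} (hk : 0 < k) {q : Fin n}
    (hq : ∀ m, t m ≠ q) : BLamChain n d U V t hk * Emat n d q = 0 := by
  rw [BLamChain, Matrix.add_mul, Matrix.sum_mul, BLamEnd_mul_Emat_of_ne (hq _).symm, add_zero]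
  refine Finset.sum_eq_zero fun ℓ _ => ?_
  split_ifs
  · exact BLamMid_mul_Emat_of_ne (hq _).symm (hq _).symm
  · exact Matrix.zero_mul _

theorem Emat_transpose_mul_blockQ_mul_BLamChain (hA : Assumption2 n d U V)
    {t : Fin k → Fin n} (ht : StrictMono t) (hk : 0 < k) (m : Fin k) :
    (Emat n d (t m))ᵀ * blockQ n d U V * BLamChain n d U V t hk = (Emat n d (t m))ᵀ := by
  set G : ℕ → Matrix (Fin d) (Fin n × Fin d) ℝ := fun x =>
    if h : x < k then U (t m) * (U (t ⟨x, h⟩))⁻¹ * (Emat n d (t ⟨x, h⟩))ᵀ else 0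
  have hmid : ∀ ℓ : Fin k, (Emat n d (t m))ᵀ * blockQ n d U V *
      (if h : (ℓ : ℕ) + 1 < k then BLamMid n d U V (t ℓ) (t ⟨(ℓ : ℕ) + 1, h⟩) else 0) =
      if (m : ℕ) ≤ ℓ ∧ (ℓ : ℕ) + 1 < k then G ℓ - G (ℓ + 1) else 0 := by
    intro ℓ
    by_cases h : (ℓ : ℕ) + 1 < k
    · have hlt : t ℓ < t ⟨ℓ + 1, h⟩ := ht (Fin.mk_lt_mk.mpr (Nat.lt_succ_self _))
      rw [dif_pos h]
      by_cases hm : (m : ℕ) ≤ ℓ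
      · rw [Emat_transpose_mul_blockQ_mul_BLamMid_of_le hA (ht.monotone hm) hlt,
          if_pos ⟨hm, h⟩]
        simp [G, h]
      · rw [Emat_transpose_mul_blockQ_mul_BLamMid_of_ge hA hlt.le
          (ht.monotone (Fin.mk_le_mk.mpr (by omega))), if_neg (by omega)]
    · rw [dif_neg h, Matrix.mul_zero, if_neg (by omega)]
  have hend : (Emat n d (t m))ᵀ * blockQ n d U V * BLamEnd n d U V (t ⟨k - 1, by omega⟩) =
      G (k - 1) := by
    rw [Emat_transpose_mul_blockQ_mul_BLamEnd hA (ht.monotone (Fin.mk_le_mk.mpr (by omega)))]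
    simp [G, hk]
  calc (Emat n d (t m))ᵀ * blockQ n d U V * BLamChain n d U V t hk
      = ∑ ℓ : Fin k, (if (m : ℕ) ≤ ℓ ∧ (ℓ : ℕ) + 1 < k then G ℓ - G (ℓ + 1) else 0) +
          G (k - 1) := by
        simp only [BLamChain, Matrix.mul_add, Matrix.mul_sum, hmid, hend]
    _ = G m := by
        rw [Fin.sum_univ_eq_sum_range (fun x => if (m : ℕ) ≤ x ∧ x + 1 < k then G x - G (x + 1)
          else 0), Finset.sum_range_ite_telescope G m.isLt, sub_add_cancel]
    _ = (Emat n d (t m))ᵀ := by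
        simp [G, Matrix.mul_nonsing_inv _ (hA.isUnit_det_U (t m))]

end Chain

theorem Matrix.submatrix_val_mul_submatrix_val_eq_one {ι R : Type*} [Fintype ι] [DecidableEq ι]
    [Semiring R] {P : ι → Prop} [DecidablePred P] {A B : Matrix ι ι R}
    (hB : ∀ i j, ¬ P i → B i j = 0) (hAB : ∀ i j, P i → (A * B) i j = (1 : Matrix ι ι R) i j) :
    A.submatrix Subtype.val Subtype.val * B.submatrix Subtype.val Subtype.val =
      (1 : Matrix (Subtype P) (Subtype P) R) := by
  ext ⟨i, hi⟩ ⟨j, hj⟩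
  have hout : ∑ r : {r // ¬ P r}, A i r * B r j = 0 :=
    Finset.sum_eq_zero fun r _ => by rw [hB _ _ r.2, mul_zero]
  have h := hAB i j hi
  rw [Matrix.mul_apply, ← Fintype.sum_subtype_add_sum_subtype P, hout, add_zero] at h
  simpa [Matrix.mul_apply, Matrix.one_apply] using h

theorem isUnit_blockSubMat_and_blockHatInv_eq {n d : ℕ}
    {Q N : Matrix (Fin n × Fin d) (Fin n × Fin d) ℝ} {S : Finset (Fin n)}
    (hrow : ∀ i ∉ S, (Emat n d i)ᵀ * N = 0) (hcol : ∀ j ∉ S, N * Emat n d j = 0)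
    (hQN : ∀ i ∈ S, (Emat n d i)ᵀ * Q * N = (Emat n d i)ᵀ) :
    IsUnit (blockSubMat n d Q S) ∧ blockHatInv n d Q S = N := by
  have hN_row : ∀ p q, p.1 ∉ S → N p q = 0 := fun p q hp => by
    simpa [Emat_transpose_mul] using congr_fun₂ (hrow p.1 hp) p.2 q
  have hN_col : ∀ p q, q.1 ∉ S → N p q = 0 := fun p q hq => by
    simpa [mul_Emat] using congr_fun₂ (hcol q.1 hq) p q.2
  have hinv : blockSubMat n d Q S * N.submatrix Subtype.val Subtype.val = 1 := by
    refine Matrix.submatrix_val_mul_submatrix_val_eq_one hN_row fun p q hp => ?_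
    have h := congr_fun₂ (hQN p.1 hp) p.2 q
    rw [Matrix.mul_assoc, Emat_transpose_mul] at h
    simpa [Emat, Matrix.one_apply, Prod.ext_iff, eq_comm] using h
  refine ⟨(Matrix.isUnit_iff_isUnit_det _).mpr (Matrix.isUnit_det_of_right_inverse hinv), ?_⟩
  ext p q
  simp only [blockHatInv, Matrix.inv_eq_right_inv hinv, Matrix.of_apply]
  split_ifs with hp hq
  · rfl
  · exact (hN_col p q hq).symm
  · exact (hN_row p q hp).symm

theorem stmt_11 (n d : ℕ)
    (U V : Fin n → Matrix (Fin d) (Fin d) ℝ) (hA : Assumption2 n d U V)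
    (S : Finset (Fin n)) (k : ℕ) (hk : 0 < k) (t : Fin k → Fin n)
    (hmono : StrictMono t) (hrange : S = Finset.image t Finset.univ) :
    IsUnit (blockSubMat n d (blockQ n d U V) S) ∧
      blockHatInv n d (blockQ n d U V) S =
        (∑ ℓ : Fin k,
            if h : (ℓ : ℕ) + 1 < k then BLamMid n d U V (t ℓ) (t ⟨(ℓ : ℕ) + 1, h⟩) else 0) +
          BLamEnd n d U V (t ⟨k - 1, by omega⟩) := by
  subst hrange
  refine isUnit_blockSubMat_and_blockHatInv_eq (N := BLamChain n d U V t hk) ?_ ?_ ?_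
  · intro i hi
    exact Emat_transpose_mul_BLamChain_of_notMem hk (by simpa using hi)
  · intro j hj
    exact BLamChain_mul_Emat_of_notMem hk (by simpa using hj)
  · intro i hi
    obtain ⟨m, -, rfl⟩ := Finset.mem_image.mp hi
    exact Emat_transpose_mul_blockQ_mul_BLamChain hA hmono hk m
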